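/- If L₁ and L₂ are tense logics and K is a class of rooted general frames, then the frames in K validating L₁ ∩ L₂ are exactly those validating L₁ together with those validating L₂, i.e., K(L₁ ∩ L₂) = K(L₁) ∪ K(L₂). -/

import Mathlib

/-- Tense formulas over ⊥, →, □, ⧫ (past diamond). -/
inductive TForm : Type
  | var : ℕ → TForm
  | bot : TForm
  | imp : TForm → TForm → TForm
  | box : TForm → TForm
  | bdia : TForm → TForm

namespace TForm
def neg (φ : TForm) : TForm := imp φ bot
def top : TForm := neg bot
def or' (φ ψ : TForm) : TForm := imp (neg φ) ψ
def and' (φ ψ : TForm) : TForm := neg (imp φ (neg ψ))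
def dia (φ : TForm) : TForm := neg (box (neg φ))
def bbox (φ : TForm) : TForm := neg (bdia (neg φ))
end TForm

variable {X : Type*}

/-- Truth of a tense formula at a point of a Kripke model. -/
def sat (R : X → X → Prop) (V : ℕ → X → Prop) : X → TForm → Prop
  | x, .var n => V n x
  | _, .bot => False
  | x, .imp φ ψ => sat R V x φ → sat R V x ψ
  | x, .box φ => ∀ y, R x y → sat R V y φ
  | x, .bdia φ => ∃ y, R y x ∧ sat R V y φ

/-- `rsharp R k x` is the set `R#^k[x]` of points reachable from `x`
in at most `k` forward/backward `R`-steps. -/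
def rsharp (R : X → X → Prop) : ℕ → X → Set X
  | 0, x => {x}
  | k+1, x => rsharp R k x ∪ {z | ∃ y ∈ rsharp R k x, R y z} ∪ {z | ∃ y ∈ rsharp R k x, R z y}

/-- `R#^ω[x]`. -/
def rsharpOmega (R : X → X → Prop) (x : X) : Set X := ⋃ k, rsharp R k x

/-- A frame is rooted (connected) if every point reaches every other. -/
def Rooted (R : X → X → Prop) : Prop := ∀ x y : X, y ∈ rsharpOmega R x

/-- A general frame `(X,R,A)`. -/
structure GenFrame where
  carrier : Type
  rel : carrier → carrier → Prop
  sets : Set (Set carrier)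
  carrier_nonempty : Nonempty carrier
  empty_mem : ∅ ∈ sets
  inter_mem : ∀ U V, U ∈ sets → V ∈ sets → U ∩ V ∈ sets
  compl_mem : ∀ U ∈ sets, Uᶜ ∈ sets
  fwd_mem : ∀ U ∈ sets, {z | ∃ y ∈ U, rel y z} ∈ sets
  bwd_mem : ∀ U ∈ sets, {z | ∃ y ∈ U, rel z y} ∈ sets

/-- Substitution on tense formulas. -/
def substF (s : ℕ → TForm) : TForm → TForm
  | .var n => s n
  | .bot => .bot
  | .imp φ ψ => .imp (substF s φ) (substF s ψ)
  | .box φ => .box (substF s φ)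
  | .bdia φ => .bdia (substF s φ)

/-- `φ` is a classical (Boolean) tautology of the tense language, treating
subformulas other than `⊥`, `→` as atoms. -/
def IsTaut (φ : TForm) : Prop :=
  ∀ v : TForm → Prop, (v .bot ↔ False) → (∀ α β, v (.imp α β) ↔ (v α → v β)) → v φ

/-- A tense logic: contains classical propositional logic, satisfies the
residuation rule, and is closed under modus ponens and substitution. -/
structure IsTenseLogic (L : Set TForm) : Prop where
  taut : ∀ φ, IsTaut φ → φ ∈ L
  residuation : ∀ φ ψ : TForm, (.imp (.bdia φ) ψ ∈ L) ↔ (.imp φ (.box ψ) ∈ L)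
  mp : ∀ φ ψ : TForm, φ ∈ L → .imp φ ψ ∈ L → ψ ∈ L
  subst : ∀ φ ∈ L, ∀ s, substF s φ ∈ L

/-- Validity of a formula in a general frame. -/
def GenFrame.Valid (F : GenFrame) (φ : TForm) : Prop :=
  ∀ V : ℕ → Set F.carrier, (∀ n, V n ∈ F.sets) → ∀ x, sat F.rel (fun n y => y ∈ V n) x φ

open TForm

/-- The operator `∇` of the paper, `∇φ = φ ∧ □φ ∧ ■φ`. -/
def nabla (φ : TForm) : TForm := and' φ (and' (box φ) (bbox φ))

def nablaIter : ℕ → TForm → TForm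
  | 0, φ => φ
  | k+1, φ => nablaIter k (nabla φ)

namespace IsTenseLogic

variable {L : Set TForm} (hL : IsTenseLogic L)
include hL

theorem mp_taut {α β : TForm} (hα : α ∈ L) (h : IsTaut (imp α β)) : β ∈ L :=
  hL.mp _ _ hα (hL.taut _ h)

theorem mp_taut₂ {α β γ : TForm} (hα : α ∈ L) (hβ : β ∈ L) (h : IsTaut (imp α (imp β γ))) :
    γ ∈ L :=
  hL.mp _ _ hβ (hL.mp_taut hα h)

theorem top_mem : top ∈ L :=
  hL.taut _ fun v hbot himp => by simp only [top, neg, himp, hbot]; tauto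

theorem and_mem {α β : TForm} (hα : α ∈ L) (hβ : β ∈ L) : and' α β ∈ L :=
  hL.mp_taut₂ hα hβ fun v hbot himp => by simp only [and', neg, himp, hbot]; tauto

theorem or_mem_left {α : TForm} (β : TForm) (hα : α ∈ L) : or' α β ∈ L :=
  hL.mp_taut hα fun v hbot himp => by simp only [or', neg, himp, hbot]; tauto

theorem or_mem_right (α : TForm) {β : TForm} (hβ : β ∈ L) : or' α β ∈ L :=
  hL.mp_taut hβ fun v hbot himp => by simp only [or', neg, himp, hbot]; tauto

/-- Necessitation for `□`: residuate `⧫⊤ → α`. -/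
theorem box_mem {α : TForm} (hα : α ∈ L) : box α ∈ L := by
  have h : imp (bdia top) α ∈ L := hL.mp_taut hα fun v _ himp => by simp only [himp]; tauto
  exact hL.mp _ _ hL.top_mem ((hL.residuation _ _).mp h)

/-- Necessitation for `■`: `■α = ¬⧫¬α` is the residual of `¬α → □⊥`. -/
theorem bbox_mem {α : TForm} (hα : α ∈ L) : bbox α ∈ L :=
  (hL.residuation _ _).mpr <| hL.mp_taut hα fun v hbot himp => by
    simp only [neg, himp, hbot]; tauto

theorem nabla_mem {α : TForm} (hα : α ∈ L) : nabla α ∈ L :=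
  hL.and_mem hα (hL.and_mem (hL.box_mem hα) (hL.bbox_mem hα))

theorem nablaIter_mem {α : TForm} (hα : α ∈ L) (k : ℕ) : nablaIter k α ∈ L := by
  induction k generalizing α with
  | zero => exact hα
  | succ k ih => exact ih (hL.nabla_mem hα)

end IsTenseLogic

section Semantics

variable {R : X → X → Prop} {V : ℕ → X → Prop}

theorem sat_substF (s : ℕ → TForm) (φ : TForm) (x : X) :
    sat R V x (substF s φ) ↔ sat R (fun n y => sat R V y (s n)) x φ := by
  induction φ generalizing x <;> simp [sat, substF, *]

theorem sat_or' {α β : TForm} {x : X} : sat R V x (or' α β) ↔ sat R V x α ∨ sat R V x β := by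
  simp only [or', neg, sat]; tauto

theorem sat_nabla {φ : TForm} {x : X} :
    sat R V x (nabla φ) ↔
      sat R V x φ ∧ (∀ y, R x y → sat R V y φ) ∧ ∀ y, R y x → sat R V y φ := by
  simp only [nabla, and', bbox, neg, sat, imp_false, not_not, not_exists, not_and, Classical.not_imp]

theorem sat_of_sat_nablaIter {φ : TForm} {k : ℕ} {x z : X} (h : sat R V x (nablaIter k φ))
    (hz : z ∈ rsharp R k x) : sat R V z φ := by
  induction k generalizing φ z with
  | zero => rwa [hz]
  | succ k ih =>
    rcases hz with (hz | ⟨y, hy, hyz⟩) | ⟨y, hy, hzy⟩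
    · exact (sat_nabla.mp (ih h hz)).1
    · exact (sat_nabla.mp (ih h hy)).2.1 z hyz
    · exact (sat_nabla.mp (ih h hy)).2.2 z hzy

end Semantics

/-- Renames the variables of `φ` onto the even (`b = inl`) or odd (`b = inr`) variables, so that
counterexamples to two formulas can live in one valuation. -/
def renameApart (b : ℕ → ℕ ⊕ ℕ) (φ : TForm) : TForm :=
  substF (fun n => var (Equiv.natSumNatEquivNat (b n))) φ

/-- The refutations of `φ` and `ψ` are merged into one valuation; rootedness puts the refuting
point of `ψ` within `k` steps of that of `φ`, where `∇^k` carries the failure of `ψ` back. -/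
theorem GenFrame.exists_not_valid_or_nablaIter (F : GenFrame) (hF : Rooted F.rel)
    {φ ψ : TForm} (hφ : ¬ F.Valid φ) (hψ : ¬ F.Valid ψ) :
    ∃ k, ¬ F.Valid (or' (renameApart .inl φ) (nablaIter k (renameApart .inr ψ))) := by
  simp only [GenFrame.Valid, not_forall] at hφ hψ
  obtain ⟨V₁, hV₁, x₁, hx₁⟩ := hφ
  obtain ⟨V₂, hV₂, x₂, hx₂⟩ := hψ
  obtain ⟨k, hk⟩ := Set.mem_iUnion.mp (hF x₁ x₂)
  refine ⟨k, fun hvalid => ?_⟩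
  let V := Sum.elim V₁ V₂ ∘ Equiv.natSumNatEquivNat.symm
  have hV : ∀ n, V n ∈ F.sets := fun n => by
    cases h : Equiv.natSumNatEquivNat.symm n <;> simp [V, h, hV₁, hV₂]
  rcases sat_or'.mp (hvalid V hV x₁) with h | h
  · exact hx₁ (by simpa [renameApart, sat_substF, sat, V] using h)
  · exact hx₂ (by simpa [renameApart, sat_substF, sat, V] using sat_of_sat_nablaIter h hk)

/-- for tense logics `L₁, L₂` and a class `K` of rooted general
frames, `K(L₁ ∩ L₂) = K(L₁) ∪ K(L₂)`. -/
theorem stmt3 (L₁ L₂ : Set TForm) (h₁ : IsTenseLogic L₁) (h₂ : IsTenseLogic L₂)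
    (K : Set GenFrame) (hK : ∀ F ∈ K, Rooted F.rel) :
    {F ∈ K | ∀ φ ∈ L₁ ∩ L₂, F.Valid φ} =
      {F ∈ K | ∀ φ ∈ L₁, F.Valid φ} ∪ {F ∈ K | ∀ φ ∈ L₂, F.Valid φ} := by
  ext F
  simp only [Set.mem_ofPred_eq, Set.mem_union]
  constructor
  · rintro ⟨hF, hvalid⟩
    by_contra! ⟨hφ, hψ⟩
    obtain ⟨φ, hφL, hφ⟩ := hφ hF
    obtain ⟨ψ, hψL, hψ⟩ := hψ hF
    obtain ⟨k, hk⟩ := F.exists_not_valid_or_nablaIter (hK F hF) hφ hψ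
    exact hk <| hvalid _
      ⟨h₁.or_mem_left _ (h₁.subst φ hφL _),
        h₂.or_mem_right _ (h₂.nablaIter_mem (h₂.subst ψ hψL _) k)⟩
  · rintro (⟨hF, hvalid⟩ | ⟨hF, hvalid⟩)
    · exact ⟨hF, fun φ hφ => hvalid φ hφ.1⟩
    · exact ⟨hF, fun φ hφ => hvalid φ hφ.2⟩
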